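/- arXiv:2309.15668 — 7 statements merged into one kernel-verified Lean document; each statement's English description precedes it below -/
import Mathlib

section
/- Let F be a field and B_1, ..., B_r be pairwise commuting l×l matrices over F. Then the r·l × r·l block Vandermonde matrix M_r with (i,j) block equal to B_j^{i-1} (for i, j ∈ {1,...,r}, with B_j^0 = I) is invertible if and only if B_i - B_j is invertible for all i ≠ j. -/
open Matrix

private lemma bv_mulVec_eq_zero_of_isUnit_det {F : Type*} [Field F] {l : ℕ}
    {A : Matrix (Fin l) (Fin l) F} (h : IsUnit A.det) {v : Fin l → F}
    (hv : A.mulVec v = 0) : v = 0 := by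
  by_contra hne
  have : A.det = 0 := Matrix.exists_mulVec_eq_zero_iff.mp ⟨v, hne, hv⟩
  exact (isUnit_iff_ne_zero.mp h) this

private lemma bv_pow_mulVec_eq {F : Type*} [Field F] {l : ℕ}
    {A C : Matrix (Fin l) (Fin l) F} (hc : A * C = C * A) {v : Fin l → F}
    (hv : A.mulVec v = C.mulVec v) :
    ∀ k : ℕ, (A ^ k).mulVec v = (C ^ k).mulVec v := by
  intro k
  induction k with
  | zero => simp
  | succ k ih =>
    have hcm : Commute C A := hc.symm
    have hcomm : C * A ^ k = A ^ k * C := (hcm.pow_right k).eq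
    calc (A ^ (k+1)).mulVec v = (A ^ k).mulVec (A.mulVec v) := by
          rw [pow_succ, ← Matrix.mulVec_mulVec]
      _ = (A ^ k * C).mulVec v := by rw [hv, Matrix.mulVec_mulVec]
      _ = (C * A ^ k).mulVec v := by rw [hcomm]
      _ = C.mulVec ((C ^ k).mulVec v) := by rw [← Matrix.mulVec_mulVec, ih]
      _ = (C ^ (k+1)).mulVec v := by rw [Matrix.mulVec_mulVec, ← pow_succ']

private lemma bv_key {F : Type*} [Field F] {l : ℕ} :
    ∀ (r : ℕ) (B : Fin r → Matrix (Fin l) (Fin l) F),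
      (∀ i j, B i * B j = B j * B i) →
      (∀ i j, i ≠ j → IsUnit (B i - B j).det) →
      ∀ w : Fin r → (Fin l → F),
        (∀ i : Fin r, ∑ j, (B j ^ (i : ℕ)).mulVec (w j) = 0) →
        ∀ j, w j = 0
  | 0, _, _, _, _, _, j => j.elim0
  | (r+1), B, hcomm, hdiff, w, h, j => by
    have hsum : ∀ k : Fin (r+1), ∑ j : Fin r, (B j.succ ^ (k:ℕ)).mulVec (w j.succ)
        = -((B 0 ^ (k:ℕ)).mulVec (w 0)) := by
      intro k
      have hk := h k
      rw [Fin.sum_univ_succ] at hk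
      linear_combination (norm := abel) hk
    set w' : Fin r → (Fin l → F) := fun j => (B j.succ - B 0).mulVec (w j.succ) with hw'def
    have hw' : ∀ i : Fin r, ∑ j, (B j.succ ^ (i : ℕ)).mulVec (w' j) = 0 := by
      intro i
      have hstep : ∀ j : Fin r, (B j.succ ^ (i:ℕ)).mulVec (w' j)
          = (B j.succ ^ ((i:ℕ)+1)).mulVec (w j.succ)
            - (B 0).mulVec ((B j.succ ^ (i:ℕ)).mulVec (w j.succ)) := by
        intro j
        have hcm : Commute (B 0) (B j.succ) := hcomm 0 j.succ
        have hc : B j.succ ^ (i:ℕ) * B 0 = B 0 * B j.succ ^ (i:ℕ) := (hcm.pow_right (i:ℕ)).eq.symm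
        rw [hw'def]
        rw [Matrix.mulVec_mulVec, Matrix.mul_sub, hc, pow_succ]
        rw [Matrix.sub_mulVec]
        simp [Matrix.mulVec_mulVec]
      have e1 := hsum i.succ
      have e2 := hsum i.castSucc
      simp only [Fin.val_succ, Fin.coe_castSucc] at e1 e2
      have hlin := map_sum (Matrix.mulVecLin (B 0))
        (fun j : Fin r => (B j.succ ^ (i:ℕ)).mulVec (w j.succ)) Finset.univ
      simp only [Matrix.mulVecLin_apply] at hlin
      simp only [hstep]
      rw [Finset.sum_sub_distrib, e1, ← hlin, e2, Matrix.mulVec_neg, Matrix.mulVec_mulVec,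
        ← pow_succ']
      abel
    have hz : ∀ j : Fin r, w' j = 0 :=
      bv_key r (fun j => B j.succ) (fun i j => hcomm i.succ j.succ)
        (fun i j hij => hdiff i.succ j.succ (fun hc => hij (Fin.succ_injective _ hc))) w' hw'
    have hwsucc : ∀ j : Fin r, w j.succ = 0 := fun j =>
      bv_mulVec_eq_zero_of_isUnit_det (hdiff j.succ 0 (Fin.succ_ne_zero j)) (hz j)
    have hw0 : w 0 = 0 := by
      have h0 := h 0
      rw [Fin.sum_univ_succ] at h0
      simpa [hwsucc] using h0
    exact Fin.cases hw0 hwsucc j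

private lemma bv_bridge {F : Type*} [Field F] {r l : ℕ}
    (B : Fin r → Matrix (Fin l) (Fin l) F) (u : Fin r × Fin l → F) (p : Fin r × Fin l) :
    ((Matrix.of (fun p q : Fin r × Fin l => (B q.1 ^ (p.1 : ℕ)) p.2 q.2)).mulVec u) p
      = ∑ j, ((B j ^ (p.1 : ℕ)).mulVec (fun y => u (j, y))) p.2 := by
  simp [Matrix.mulVec, dotProduct, Fintype.sum_prod_type]

/-- Block Vandermonde criterion (Ye–Barg): for pairwise commuting `l×l` matrices
`B_1, …, B_r` over a field, the block Vandermonde matrix with `(i,j)` block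
`B_j^(i-1)` is invertible iff `B_i - B_j` is invertible for all `i ≠ j`. -/
theorem stmt_5 (F : Type*) [Field F] (r l : ℕ)
    (B : Fin r → Matrix (Fin l) (Fin l) F)
    (hcomm : ∀ i j, B i * B j = B j * B i) :
    IsUnit (Matrix.of (fun p q : Fin r × Fin l => (B q.1 ^ (p.1 : ℕ)) p.2 q.2)).det ↔
      ∀ i j, i ≠ j → IsUnit (B i - B j).det := by
  constructor
  · intro hM i j hij
    by_contra hni
    rw [isUnit_iff_ne_zero, not_ne_iff] at hni
    obtain ⟨v, hv0, hv⟩ := Matrix.exists_mulVec_eq_zero_iff.mpr hni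
    have hvij : (B i).mulVec v = (B j).mulVec v := by
      rw [Matrix.sub_mulVec] at hv
      exact sub_eq_zero.mp hv
    have hpow := bv_pow_mulVec_eq (hcomm i j) hvij
    set W : Fin r × Fin l → F := fun q => if q.1 = i then v q.2 else if q.1 = j then -v q.2 else 0
      with hWdef
    have hW0 : W ≠ 0 := by
      obtain ⟨x, hx⟩ := Function.ne_iff.mp hv0
      intro hWz
      have := congrFun hWz (i, x)
      simp [hWdef] at this
      exact hx this
    have hMW : (Matrix.of (fun p q : Fin r × Fin l => (B q.1 ^ (p.1 : ℕ)) p.2 q.2)).mulVec W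
        = 0 := by
      funext p
      rw [bv_bridge]
      have hterm : ∀ k : Fin r, (B k ^ (p.1 : ℕ)).mulVec (fun y => W (k, y))
          = (if k = i then (B i ^ (p.1:ℕ)).mulVec v else 0)
            + (if k = j then -((B j ^ (p.1:ℕ)).mulVec v) else 0) := by
        intro k
        rcases eq_or_ne k i with h1 | h1
        · subst h1
          have hv' : (fun y => W (k, y)) = v := by funext y; simp [hWdef]
          rw [hv']
          simp [hij]
        · rcases eq_or_ne k j with h2 | h2
          · subst h2
            have hv' : (fun y => W (k, y)) = -v := by funext y; simp [hWdef, h1]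
            rw [hv']
            simp [h1, Matrix.mulVec_neg]
          · have hv' : (fun y => W (k, y)) = 0 := by funext y; simp [hWdef, h1, h2]
            rw [hv']
            simp [h1, h2]
      simp only [hterm, Pi.add_apply, ite_apply, Pi.neg_apply, Pi.zero_apply]
      rw [Finset.sum_add_distrib, Finset.sum_ite_eq' Finset.univ i,
        Finset.sum_ite_eq' Finset.univ j]
      simp [hpow (p.1 : ℕ)]
    have : (Matrix.of (fun p q : Fin r × Fin l => (B q.1 ^ (p.1 : ℕ)) p.2 q.2)).det = 0 :=
      Matrix.exists_mulVec_eq_zero_iff.mp ⟨W, hW0, hMW⟩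
    exact (isUnit_iff_ne_zero.mp hM) this
  · intro hdiff
    rw [isUnit_iff_ne_zero]
    intro h0
    obtain ⟨u, hu0, hu⟩ := Matrix.exists_mulVec_eq_zero_iff.mpr h0
    have hrel : ∀ i : Fin r, ∑ j, (B j ^ (i : ℕ)).mulVec (fun y => u (j, y)) = 0 := by
      intro i
      funext x
      have := congrFun hu (i, x)
      rw [bv_bridge] at this
      simpa using this
    have hz := bv_key r B hcomm hdiff (fun j y => u (j, y)) hrel
    apply hu0
    funext q
    exact congrFun (hz q.1) q.2
end

section
/- Let F be a field, s, n, r ≥ 1, l = s^n, and let λ_{i,u} ∈ F (i ∈ {1,...,n}, u ∈ {0,...,s-1}) be sn pairwise distinct elements. Define A_i as the l×l diagonal matrix with (a,a)-entry λ_{i,a_i}, where a_i is the i-th s-ary digit of a. Then for every subset S ⊆ {1,...,n} with |S| = r, the r·l × r·l block matrix with (t,j) block A_{i_j}^{t} (t ∈ {0,...,r-1}, i_j ∈ S) is invertible. -/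
/-- MDS property of Construction 1: with pairwise distinct `λ_{i,u}`, every `r×r`
block submatrix (columns indexed by an `r`-subset of `{1,…,n}`, blocks `A_{i_j}^t`)
of the block Vandermonde parity-check matrix is invertible. -/
theorem stmt_7 (F : Type*) [Field F] (s n r : ℕ) (hs : 1 ≤ s) (hn : 1 ≤ n) (hr : 1 ≤ r)
    (lam : Fin n → ℕ → F)
    (hinj : ∀ i u i' u', u < s → u' < s → lam i u = lam i' u' → i = i' ∧ u = u')
    (A : Fin n → Matrix (Fin (s ^ n)) (Fin (s ^ n)) F)
    (hA : ∀ i, A i = Matrix.diagonal (fun a : Fin (s ^ n) => lam i ((a.val / s ^ i.val) % s)))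
    (f : Fin r → Fin n) (hf : Function.Injective f) :
    IsUnit (Matrix.of
      (fun p q : Fin r × Fin (s ^ n) => (A (f q.1) ^ (p.1 : ℕ)) p.2 q.2)).det := by
  have hM : (Matrix.of (fun p q : Fin r × Fin (s ^ n) =>
      (A (f q.1) ^ (p.1 : ℕ)) p.2 q.2)) =
      Matrix.blockDiagonal (fun a : Fin (s ^ n) =>
        Matrix.transpose (Matrix.vandermonde (fun u : Fin r =>
          lam (f u) ((a.val / s ^ (f u).val) % s)))) := by
    ext ⟨t, a⟩ ⟨u, b⟩
    simp only [Matrix.of_apply, hA, Matrix.diagonal_pow, Matrix.diagonal_apply,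
      Matrix.blockDiagonal_apply, Matrix.transpose_apply, Matrix.vandermonde]
    by_cases h : a = b
    · subst h; simp
    · simp [h]
  rw [hM, Matrix.det_blockDiagonal]
  rw [isUnit_iff_ne_zero]
  rw [Finset.prod_ne_zero_iff]
  intro a _
  rw [Matrix.det_transpose, Matrix.det_vandermonde_ne_zero_iff]
  intro u u' h
  apply hf
  exact (hinj _ _ _ _ (Nat.mod_lt _ hs) (Nat.mod_lt _ hs) h).1
end

section
/- With the matrices A_i of Construction 2 over a field F with primitive element γ and γ^i ≠ γ^j for i ≠ j in {1,...,n}, the matrix A_i - A_j is invertible for all i ≠ j. -/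
private lemma prod_shift10 {F : Type*} [Field F] {s : ℕ} [NeZero s] (t : F) (z : ZMod s) :
    (∏ m ∈ Finset.range s, if (m : ZMod s) = z then t else 1) = t := by
  rw [Finset.prod_eq_single_of_mem z.val (Finset.mem_range.2 (ZMod.val_lt z))]
  · rw [if_pos (ZMod.natCast_rightInverse z)]
  · intro b hb hne
    rw [if_neg]
    intro h
    apply hne
    have h2 := congrArg ZMod.val h
    rwa [ZMod.val_cast_of_lt (Finset.mem_range.1 hb)] at h2


/-- Construction 2: for `γ` with `γ^1, …, γ^n` pairwise distinct and nonzero,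
the difference `A_i - A_j` of two distinct digit-shift generalized permutation
matrices is invertible. -/
theorem stmt_10 (F : Type*) [Field F] (s n : ℕ) [NeZero s] (hs : 1 ≤ s) (hn : 1 ≤ n)
    (γ : F) (hγ : γ ≠ 0)
    (hdist : ∀ i j : Fin n, i ≠ j → γ ^ (i.val + 1) ≠ γ ^ (j.val + 1))
    (A : Fin n → Matrix (Fin n → ZMod s) (Fin n → ZMod s) F)
    (hA : ∀ i a b, A i a b =
      if b = Function.update a i (a i + 1)
        then (if a i = 0 then γ ^ (i.val + 1) else 1) else 0) :
    ∀ i j : Fin n, i ≠ j → IsUnit (A i - A j).det := by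
  intro i j hij
  rw [isUnit_iff_ne_zero]
  intro hdet
  obtain ⟨v, hv0, hv⟩ := Matrix.exists_mulVec_eq_zero_iff.2 hdet
  apply hv0
  have key : ∀ a : Fin n → ZMod s,
      (if a i = 0 then γ ^ (i.val + 1) else 1) * v (Function.update a i (a i + 1))
      = (if a j = 0 then γ ^ (j.val + 1) else 1) * v (Function.update a j (a j + 1)) := by
    intro a
    have h := congrFun hv a
    simp only [Matrix.mulVec, Matrix.sub_apply, dotProduct, sub_mul, Finset.sum_sub_distrib,
      hA, ite_mul, zero_mul, Finset.sum_ite_eq', Finset.mem_univ, if_true, Pi.zero_apply] at h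
    rw [sub_eq_zero] at h
    split_ifs at h ⊢ <;> simpa using h
  have hji : j ≠ i := hij.symm
  have hz : ∀ a : Fin n → ZMod s, v (Function.update a j (a j + 1)) = 0 := by
    intro a
    set c : ℕ → (Fin n → ZMod s) :=
      fun k x => if x = i then a i + (k : ZMod s) else if x = j then a j - k else a x with hc
    set d : ℕ → (Fin n → ZMod s) :=
      fun k x => if x = i then a i + (k : ZMod s) else if x = j then a j + 1 - k else a x with hd
    have hci : ∀ k : ℕ, c k i = a i + k := fun k => by simp [hc]
    have hcj : ∀ k : ℕ, c k j = a j - k := fun k => by simp [hc, hji]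
    have hup1 : ∀ k : ℕ, Function.update (c k) i (c k i + 1) = d (k + 1) := by
      intro k; funext t
      rcases eq_or_ne t i with rfl | hti
      · simp [hc, hd, Function.update_self]
        push_cast; ring
      · rcases eq_or_ne t j with rfl | htj
        · simp only [Function.update_of_ne hti, hc, hd, hji, if_false, if_pos rfl,
            if_neg hji]
          push_cast; ring
        · simp [Function.update_of_ne hti, hc, hd, hti, htj]
    have hup2 : ∀ k : ℕ, Function.update (c k) j (c k j + 1) = d k := by
      intro k; funext t
      rcases eq_or_ne t i with rfl | hti
      · simp [Function.update_of_ne hji.symm, hc, hd]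
      · rcases eq_or_ne t j with rfl | htj
        · simp [hc, hd, hji]
          push_cast; ring
        · simp [Function.update_of_ne htj, hc, hd, hti, htj]
    have main : ∀ k : ℕ,
        (∏ m ∈ Finset.range k, if c m i = 0 then γ ^ (i.val + 1) else 1) * v (d k)
        = (∏ m ∈ Finset.range k, if c m j = 0 then γ ^ (j.val + 1) else 1) * v (d 0) := by
      intro k
      induction k with
      | zero => simp
      | succ k ih =>
        have hk := key (c k)
        rw [hup1 k, hup2 k] at hk
        rw [Finset.prod_range_succ, Finset.prod_range_succ, mul_assoc, hk, mul_left_comm, ih]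
        ring
    have h1 : (∏ m ∈ Finset.range s, if c m i = 0 then γ ^ (i.val + 1) else 1)
        = γ ^ (i.val + 1) := by
      have : ∀ m ∈ Finset.range s, (if c m i = 0 then γ ^ (i.val + 1) else 1)
          = (if (m : ZMod s) = -(a i) then γ ^ (i.val + 1) else 1) := by
        intro m _
        rw [hci]
        congr 1
        rw [eq_iff_iff]
        constructor
        · intro h; linear_combination h
        · intro h; rw [h]; ring
      rw [Finset.prod_congr rfl this, prod_shift10]
    have h2 : (∏ m ∈ Finset.range s, if c m j = 0 then γ ^ (j.val + 1) else 1)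
        = γ ^ (j.val + 1) := by
      have : ∀ m ∈ Finset.range s, (if c m j = 0 then γ ^ (j.val + 1) else 1)
          = (if (m : ZMod s) = a j then γ ^ (j.val + 1) else 1) := by
        intro m _
        rw [hcj]
        congr 1
        rw [eq_iff_iff]
        constructor
        · intro h; linear_combination -h
        · intro h; rw [h]; ring
      rw [Finset.prod_congr rfl this, prod_shift10]
    have hds : d s = d 0 := by
      funext t
      rcases eq_or_ne t i with rfl | hti
      · simp [hd]
      · rcases eq_or_ne t j with rfl | htj
        · simp [hd, hji]
        · simp [hd, hti, htj]
    have hmain := main s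
    rw [hds, h1, h2] at hmain
    have hvd0 : v (d 0) = 0 := by
      by_contra hne
      exact hdist i j hij (mul_right_cancel₀ hne hmain)
    have hd0 : d 0 = Function.update a j (a j + 1) := by
      funext t
      rcases eq_or_ne t i with rfl | hti
      · simp [hd, Function.update_of_ne hji.symm]
      · rcases eq_or_ne t j with rfl | htj
        · simp [hd, hji]
        · simp [hd, hti, htj, Function.update_of_ne htj]
    rw [← hd0]
    exact hvd0
  funext b
  have h := hz (Function.update b j (b j - 1))
  have hb : Function.update (Function.update b j (b j - 1)) j
      ((Function.update b j (b j - 1)) j + 1) = b := by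
    funext t
    rcases eq_or_ne t j with rfl | htj
    · simp
    · simp [Function.update_of_ne htj]
  rw [hb] at h
  simpa using h
end

section
/- Let F be a field, γ ∈ F, and let A_1,...,A_n be l×l matrices over F with A_i^s = γ^i I for all i. Let C_1,...,C_n ∈ F^l satisfy ∑_{i=1}^n A_i^t C_i = 0 for all t ∈ {0,...,r-1}, where r ≥ h·s + 1 for some h ≥ 1. Then for every polynomial P ∈ F[x] with deg P ≤ h and every m ∈ {0,...,r - h·s - 1}, ∑_{j=1}^n P(γ^j) A_j^m C_j = 0. -/
/-- Linearity step of Lemma 5: if `A_i^s = γ^i I` and the `C_i` satisfy the parity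
checks `∑_i A_i^t C_i = 0` for `t < r` with `r ≥ h·s + 1`, then for every
polynomial `P` of degree at most `h` and every `m` with `m + h·s < r`,
`∑_j P(γ^j) A_j^m C_j = 0`. -/
theorem stmt_11 (F : Type*) [Field F] (n l s r h : ℕ) (hh : 1 ≤ h)
    (hr : h * s + 1 ≤ r) (γ : F)
    (A : Fin n → Matrix (Fin l) (Fin l) F)
    (hA : ∀ i : Fin n, A i ^ s = γ ^ (i.val + 1) • (1 : Matrix (Fin l) (Fin l) F))
    (C : Fin n → Fin l → F)
    (hC : ∀ t < r, ∑ i, (A i ^ t).mulVec (C i) = 0) :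
    ∀ P : Polynomial F, P.natDegree ≤ h → ∀ m, m + h * s < r →
      ∑ j, P.eval (γ ^ (j.val + 1)) • (A j ^ m).mulVec (C j) = 0 := by
  intro P hP m hm
  have key : ∀ p, p ≤ h → ∑ j, (γ ^ (j.val + 1)) ^ p • (A j ^ m).mulVec (C j) = 0 := by
    intro p hp
    have h1 := hC (m + p * s) (by
      have : p * s ≤ h * s := Nat.mul_le_mul_right s hp
      omega)
    have h2 : ∀ j : Fin n, (A j ^ (m + p * s)) = (γ ^ (j.val + 1)) ^ p • (A j ^ m) := by
      intro j
      rw [pow_add, mul_comm p s, pow_mul, hA j, smul_pow, one_pow, Matrix.mul_smul, mul_one]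
    rw [← h1]
    apply Finset.sum_congr rfl
    intro j _
    rw [h2 j, Matrix.smul_mulVec]
  have heval : ∀ x : F, P.eval x = ∑ p ∈ Finset.range (h+1), P.coeff p * x ^ p :=
    fun x => Polynomial.eval_eq_sum_range' (Nat.lt_succ_of_le hP) x
  calc ∑ j, P.eval (γ ^ (j.val + 1)) • (A j ^ m).mulVec (C j)
      = ∑ j, ∑ p ∈ Finset.range (h+1),
          (P.coeff p * (γ ^ (j.val + 1)) ^ p) • (A j ^ m).mulVec (C j) := by
        apply Finset.sum_congr rfl; intro j _
        rw [heval, Finset.sum_smul]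
    _ = ∑ p ∈ Finset.range (h+1),
          P.coeff p • ∑ j, (γ ^ (j.val + 1)) ^ p • (A j ^ m).mulVec (C j) := by
        rw [Finset.sum_comm]
        apply Finset.sum_congr rfl; intro p _
        rw [Finset.smul_sum]
        apply Finset.sum_congr rfl; intro j _
        rw [mul_smul]
    _ = 0 := by
        apply Finset.sum_eq_zero; intro p hp
        rw [key p (Nat.lt_succ_iff.mp (Finset.mem_range.mp hp)), smul_zero]
end

section
/- Let F be a field, γ ∈ F, A_1,...,A_n l×l matrices with A_i^s = γ^i I, and C_1,...,C_n ∈ F^l with ∑_{i=1}^n A_i^t C_i = 0 for t ∈ {0,...,r-1}, where r ≥ h·s. Let E = {i_1,...,i_h} ⊆ {1,...,n}. Then for all m ∈ {0,...,r - h·s - 1}: ∑_{j ∉ E} (∏_{k=1}^h (γ^j - γ^{i_k})) A_j^m C_j = 0. -/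
/-! If `A_j ^ s = c_j • 1`, then `A_j ^ (m + p * s) = c_j ^ p • A_j ^ m`, so any polynomial
identity `P = ∑ p, a_p X ^ p` turns the parity checks `∑_j A_j ^ t C_j = 0` for
`t = m, m + s, …, m + (deg P) s` into `∑_j P(c_j) A_j ^ m C_j = 0`. Taking for `P` the monic
polynomial with roots `γ ^ i`, `i ∈ E`, kills exactly the terms indexed by `E`. -/

open Polynomial Finset Matrix

section ParityCheck

variable {R ι n : Type*} [CommRing R] [Fintype ι] [Fintype n] [DecidableEq n]

theorem Matrix.eval_smul_pow_mulVec {A : Matrix n n R} {s : ℕ} {c : R}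
    (hA : A ^ s = c • 1) (P : R[X]) (m : ℕ) (v : n → R) :
    P.eval c • (A ^ m *ᵥ v) =
      ∑ p ∈ range (P.natDegree + 1), P.coeff p • (A ^ (m + p * s) *ᵥ v) := by
  have hP : aeval (A ^ s) P = P.eval c • 1 := by
    rw [hA, ← Algebra.algebraMap_eq_smul_one, aeval_algebraMap_apply_eq_algebraMap_eval,
      Algebra.algebraMap_eq_smul_one]
  calc P.eval c • (A ^ m *ᵥ v) = (aeval (A ^ s) P * A ^ m) *ᵥ v := by
        rw [hP, smul_mul, one_mul, smul_mulVec]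
    _ = _ := by
        simp only [aeval_eq_sum_range, sum_mul, sum_mulVec, smul_mul, smul_mulVec, ← pow_mul,
          ← pow_add, mul_comm s, add_comm m]

theorem Matrix.sum_eval_smul_pow_mulVec_eq_zero {A : ι → Matrix n n R} {s : ℕ} {c : ι → R}
    (hA : ∀ i, A i ^ s = c i • 1) {C : ι → n → R} {r : ℕ}
    (hC : ∀ t < r, ∑ i, A i ^ t *ᵥ C i = 0) (P : R[X]) {m : ℕ}
    (hm : m + P.natDegree * s < r) :
    ∑ i, P.eval (c i) • (A i ^ m *ᵥ C i) = 0 := by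
  simp only [eval_smul_pow_mulVec (hA _), sum_comm (s := univ), ← smul_sum]
  refine sum_eq_zero fun p hp => ?_
  have hp : p * s ≤ P.natDegree * s := Nat.mul_le_mul_right s (mem_range_succ_iff.mp hp)
  rw [hC _ (by omega), smul_zero]

end ParityCheck

theorem stmt_12_general (F : Type*) [Field F] (n l s r h : ℕ)
    (γ : F)
    (A : Fin n → Matrix (Fin l) (Fin l) F)
    (hA : ∀ i : Fin n, A i ^ s = γ ^ (i.val + 1) • (1 : Matrix (Fin l) (Fin l) F))
    (C : Fin n → Fin l → F)
    (hC : ∀ t < r, ∑ i, (A i ^ t).mulVec (C i) = 0)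
    (E : Finset (Fin n)) (hE : E.card = h) :
    ∀ m, m + h * s < r →
      ∑ j ∈ Eᶜ, (∏ k ∈ E, (γ ^ (j.val + 1) - γ ^ (k.val + 1))) •
        (A j ^ m).mulVec (C j) = 0 := by
  intro m hm
  set P : F[X] := ∏ k ∈ E, (X - Polynomial.C (γ ^ (k.val + 1)))
  have hP : ∀ j : Fin n,
      P.eval (γ ^ (j.val + 1)) = ∏ k ∈ E, (γ ^ (j.val + 1) - γ ^ (k.val + 1)) :=
    fun j => by simp [P, eval_prod]
  have hdeg : P.natDegree = h := by simp only [P, natDegree_finsetProd_X_sub_C_eq_card, hE]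
  have hsum := sum_eval_smul_pow_mulVec_eq_zero hA hC P (m := m) (by rwa [hdeg])
  simp only [hP] at hsum
  rw [← hsum]
  refine sum_subset (subset_univ _) fun j _ hj => ?_
  rw [prod_eq_zero (notMem_compl.mp hj) (sub_self _), zero_smul]

/-- Lemma 5 (lnoh): if `A_i^s = γ^i I` and `∑_i A_i^t C_i = 0` for `t < r`, then
for any set `E` of `h` failed nodes and any `m` with `m + h·s < r`,
`∑_{j ∉ E} (∏_{k ∈ E} (γ^j - γ^k)) A_j^m C_j = 0`. -/
theorem stmt_12 (F : Type*) [Field F] (n l s r h : ℕ) (hh : 1 ≤ h)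
    (hr : h * s ≤ r) (γ : F)
    (A : Fin n → Matrix (Fin l) (Fin l) F)
    (hA : ∀ i : Fin n, A i ^ s = γ ^ (i.val + 1) • (1 : Matrix (Fin l) (Fin l) F))
    (C : Fin n → Fin l → F)
    (hC : ∀ t < r, ∑ i, (A i ^ t).mulVec (C i) = 0)
    (E : Finset (Fin n)) (hE : E.card = h) :
    ∀ m, m + h * s < r →
      ∑ j ∈ Eᶜ, (∏ k ∈ E, (γ ^ (j.val + 1) - γ ^ (k.val + 1))) •
        (A j ^ m).mulVec (C j) = 0 :=
  stmt_12_general F n l s r h γ A hA C hC E hE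
end

section
/- With B_{j_1}, B_{j_2} as in Construction 2's reduced matrices (each B_j is an l'×l' generalized permutation matrix over a field F that cyclically increments a distinct s-ary digit position of the coordinate index, with cycle-product of multipliers equal to γ^{m_j} for some integer m_j, where γ^{m_{j_1}} ≠ γ^{m_{j_2}} and γ^{m_{j_1} - m_{j_2}} ≠ 1), the following hold: (i) each B_j is invertible; (ii) B_{j_1} B_{j_2} = B_{j_2} B_{j_1}; (iii) B_{j_1} - B_{j_2} is invertible. -/
section aux
variable {F : Type*} [Field F] {s N : ℕ} [NeZero s]

lemma prod_range_zmod_aux (f : ZMod s → F) :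
    ∏ i ∈ Finset.range s, f i = ∏ u : ZMod s, f u := by
  rw [← Fin.prod_univ_eq_prod_range (fun i => f i) s]
  apply Fintype.prod_bijective (fun i : Fin s => ((i : ℕ) : ZMod s))
  · constructor
    · intro i j h
      have := congrArg ZMod.val h
      rwa [ZMod.val_cast_of_lt i.isLt, ZMod.val_cast_of_lt j.isLt, Fin.val_inj] at this
    · intro u
      exact ⟨⟨u.val, u.val_lt⟩, by simp [ZMod.natCast_val, ZMod.cast_id]⟩
  · intro i; rfl

lemma prod_shift_add (f : ZMod s → F) (c : ZMod s) :
    ∏ i ∈ Finset.range s, f (c + i) = ∏ u : ZMod s, f u := by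
  rw [prod_range_zmod_aux (fun u => f (c + u))]
  exact Equiv.prod_comp (Equiv.addLeft c) f

lemma prod_shift_sub (f : ZMod s → F) (c : ZMod s) :
    ∏ i ∈ Finset.range s, f (c - (i + 1)) = ∏ u : ZMod s, f u := by
  have h : ∀ i : ZMod s, c - (i + 1) = (Equiv.subLeft (c - 1)) i := by
    intro i; simp [Equiv.subLeft]; ring
  rw [prod_range_zmod_aux (fun u => f (c - (u + 1)))]
  calc ∏ u : ZMod s, f (c - (u + 1)) = ∏ u : ZMod s, f ((Equiv.subLeft (c - 1)) u) :=
        Finset.prod_congr rfl fun u _ => by rw [h u]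
    _ = ∏ u : ZMod s, f u := Equiv.prod_comp (Equiv.subLeft (c - 1)) f

end aux

open Matrix
/-- Proposition 1 (Pbj2): for two generalized permutation matrices `B₁, B₂` on
`F^{s^N}` which cyclically increment distinct `s`-ary digit positions, with
nonzero multipliers whose cycle products `c₁ = γ^{m₁}` and `c₂ = γ^{m₂}` are
nonzero and distinct (equivalently `γ^{m₁-m₂} ≠ 1`): (i) each `B_j` is
invertible; (ii) they commute; (iii) `B₁ - B₂` is invertible. -/
theorem stmt_16 (F : Type*) [Field F] (s N : ℕ) [NeZero s] (hs : 1 ≤ s)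
    (p₁ p₂ : Fin N) (hp : p₁ ≠ p₂)
    (μ₁ μ₂ : ZMod s → F) (hμ₁ : ∀ u, μ₁ u ≠ 0) (hμ₂ : ∀ u, μ₂ u ≠ 0)
    (c₁ c₂ : F) (hc₁ : ∏ u : ZMod s, μ₁ u = c₁) (hc₂ : ∏ u : ZMod s, μ₂ u = c₂)
    (hc₁0 : c₁ ≠ 0) (hc₂0 : c₂ ≠ 0) (hcne : c₁ ≠ c₂)
    (B₁ B₂ : Matrix (Fin N → ZMod s) (Fin N → ZMod s) F)
    (hB₁ : ∀ a b, B₁ a b =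
      if b = Function.update a p₁ (a p₁ + 1) then μ₁ (a p₁) else 0)
    (hB₂ : ∀ a b, B₂ a b =
      if b = Function.update a p₂ (a p₂ + 1) then μ₂ (a p₂) else 0) :
    IsUnit B₁.det ∧ IsUnit B₂.det ∧ B₁ * B₂ = B₂ * B₁ ∧ IsUnit (B₁ - B₂).det := by
  classical
  have hmv₁ : ∀ (x : (Fin N → ZMod s) → F) (a), (B₁ *ᵥ x) a
      = μ₁ (a p₁) * x (Function.update a p₁ (a p₁ + 1)) := by
    intro x a
    simp only [Matrix.mulVec, dotProduct, hB₁, ite_mul, zero_mul]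
    rw [Finset.sum_ite_eq' Finset.univ (Function.update a p₁ (a p₁ + 1))
      (fun b => μ₁ (a p₁) * x b)]
    simp
  have hmv₂ : ∀ (x : (Fin N → ZMod s) → F) (a), (B₂ *ᵥ x) a
      = μ₂ (a p₂) * x (Function.update a p₂ (a p₂ + 1)) := by
    intro x a
    simp only [Matrix.mulVec, dotProduct, hB₂, ite_mul, zero_mul]
    rw [Finset.sum_ite_eq' Finset.univ (Function.update a p₂ (a p₂ + 1))
      (fun b => μ₂ (a p₂) * x b)]
    simp
  have inv_of_ker : ∀ M : Matrix (Fin N → ZMod s) (Fin N → ZMod s) F,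
      (∀ x, M *ᵥ x = 0 → x = 0) → IsUnit M.det := by
    intro M h
    rw [isUnit_iff_ne_zero]
    intro hdet
    obtain ⟨v, hv, hv0⟩ := (Matrix.exists_mulVec_eq_zero_iff).mpr hdet
    exact hv (h v hv0)
  have surj₁ : ∀ b : Fin N → ZMod s, ∃ a, Function.update a p₁ (a p₁ + 1) = b := by
    intro b
    refine ⟨Function.update b p₁ (b p₁ - 1), ?_⟩
    simp [Function.update_idem]
  have surj₂ : ∀ b : Fin N → ZMod s, ∃ a, Function.update a p₂ (a p₂ + 1) = b := by
    intro b
    refine ⟨Function.update b p₂ (b p₂ - 1), ?_⟩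
    simp [Function.update_idem]
  have h₁ : IsUnit B₁.det := by
    apply inv_of_ker
    intro x hx
    funext b
    obtain ⟨a, rfl⟩ := surj₁ b
    have h := congrFun hx a
    rw [hmv₁] at h
    have := (mul_eq_zero.mp h).resolve_left (hμ₁ _)
    simpa using this
  have h₂ : IsUnit B₂.det := by
    apply inv_of_ker
    intro x hx
    funext b
    obtain ⟨a, rfl⟩ := surj₂ b
    have h := congrFun hx a
    rw [hmv₂] at h
    have := (mul_eq_zero.mp h).resolve_left (hμ₂ _)
    simpa using this
  have hcomm : B₁ * B₂ = B₂ * B₁ := by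
    ext a b
    rw [Matrix.mul_apply, Matrix.mul_apply]
    have e₁ : ∑ c, B₁ a c * B₂ c b
        = μ₁ (a p₁) * B₂ (Function.update a p₁ (a p₁ + 1)) b := by
      simp only [hB₁, ite_mul, zero_mul]
      rw [Finset.sum_ite_eq' Finset.univ (Function.update a p₁ (a p₁ + 1))
        (fun c => μ₁ (a p₁) * B₂ c b)]
      simp
    have e₂ : ∑ c, B₂ a c * B₁ c b
        = μ₂ (a p₂) * B₁ (Function.update a p₂ (a p₂ + 1)) b := by
      simp only [hB₂, ite_mul, zero_mul]
      rw [Finset.sum_ite_eq' Finset.univ (Function.update a p₂ (a p₂ + 1))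
        (fun c => μ₂ (a p₂) * B₁ c b)]
      simp
    rw [e₁, e₂, hB₂, hB₁]
    rw [Function.update_of_ne (Ne.symm hp), Function.update_of_ne hp]
    rw [Function.update_comm hp]
    by_cases hb : b = Function.update (Function.update a p₂ (a p₂ + 1)) p₁ (a p₁ + 1)
    · simp [hb, mul_comm]
    · simp [hb]
  have h₃ : IsUnit (B₁ - B₂).det := by
    apply inv_of_ker
    intro x hx
    have key : ∀ a : Fin N → ZMod s,
        μ₁ (a p₁) * x (Function.update a p₁ (a p₁ + 1))
        = μ₂ (a p₂) * x (Function.update a p₂ (a p₂ + 1)) := by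
      intro a
      have h := congrFun hx a
      rw [Matrix.sub_mulVec] at h
      simp only [Pi.sub_apply, Pi.zero_apply, hmv₁, hmv₂] at h
      exact sub_eq_zero.mp h
    funext a
    show x a = 0
    set A : ℕ → (Fin N → ZMod s) := fun k =>
      Function.update (Function.update a p₁ (a p₁ - k)) p₂ (a p₂ + k) with hA
    have step : ∀ k : ℕ,
        μ₁ (a p₁ - (k + 1)) * x (A k) = μ₂ (a p₂ + k) * x (A (k + 1)) := by
      intro k
      set b : Fin N → ZMod s :=
        Function.update (Function.update a p₁ (a p₁ - (k + 1))) p₂ (a p₂ + k) with hbdef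
      have hb1 : b p₁ = a p₁ - (k + 1) := by
        rw [hbdef, Function.update_of_ne hp, Function.update_self]
      have hb2 : b p₂ = a p₂ + k := by
        rw [hbdef, Function.update_self]
      have hval : a p₁ - ((k : ZMod s) + 1) + 1 = a p₁ - (k : ZMod s) := by ring
      have hval2 : a p₂ + (k : ZMod s) + 1 = a p₂ + ((k : ℕ) + 1 : ℕ) := by push_cast; ring
      have hu1 : Function.update b p₁ (b p₁ + 1) = A k := by
        rw [hb1, hbdef, Function.update_comm hp.symm, Function.update_idem, hval, hA]
      have hu2 : Function.update b p₂ (b p₂ + 1) = A (k + 1) := by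
        rw [hb2, hbdef, Function.update_idem, hval2, hA]
        push_cast
        rfl
      have := key b
      rw [hu1, hu2, hb1, hb2] at this
      push_cast at this ⊢
      exact this
    have main : ∀ k : ℕ,
        (∏ i ∈ Finset.range k, μ₁ (a p₁ - (i + 1))) * x a
        = (∏ i ∈ Finset.range k, μ₂ (a p₂ + i)) * x (A k) := by
      intro k
      induction k with
      | zero => simp [hA]
      | succ k ih =>
        rw [Finset.prod_range_succ, Finset.prod_range_succ]
        have hstep := step k
        push_cast
        calc (∏ i ∈ Finset.range k, μ₁ (a p₁ - (↑i + 1))) * μ₁ (a p₁ - (↑k + 1)) * x a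
            = μ₁ (a p₁ - (↑k + 1)) * ((∏ i ∈ Finset.range k, μ₁ (a p₁ - (↑i + 1))) * x a) := by
              ring
          _ = μ₁ (a p₁ - (↑k + 1)) * ((∏ i ∈ Finset.range k, μ₂ (a p₂ + ↑i)) * x (A k)) := by
              rw [ih]
          _ = (∏ i ∈ Finset.range k, μ₂ (a p₂ + ↑i)) * (μ₁ (a p₁ - (↑k + 1)) * x (A k)) := by
              ring
          _ = (∏ i ∈ Finset.range k, μ₂ (a p₂ + ↑i)) * (μ₂ (a p₂ + ↑k) * x (A (k + 1))) := by
              rw [hstep]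
          _ = (∏ i ∈ Finset.range k, μ₂ (a p₂ + ↑i)) * μ₂ (a p₂ + ↑k) * x (A (k + 1)) := by
              ring
    have hAs : A s = a := by
      rw [hA]
      simp [ZMod.natCast_self, Function.update_eq_self]
    have hmain := main s
    rw [prod_shift_sub μ₁ (a p₁), prod_shift_add μ₂ (a p₂), hc₁, hc₂, hAs] at hmain
    have : (c₁ - c₂) * x a = 0 := by linear_combination hmain
    rcases mul_eq_zero.mp this with h | h
    · exact absurd (sub_eq_zero.mp h) hcne
    · exact h
  exact ⟨h₁, h₂, hcomm, h₃⟩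
end

section
/- Let F be a field with at least n+1 elements and γ with γ^1,...,γ^n pairwise distinct. Let s ≥ 1, h ≤ n - k, r = n - k, and assume h·s ≤ r. Let A_1,...,A_n be the matrices of Construction 2 (digit-shift generalized permutation matrices with A_i^s = γ^i I), and define the code C = {(C_1,...,C_n) : ∑_{i=1}^n A_i^t C_i = 0 for t ∈ {0,...,r-1}}. Then C is an (n, k, s^n) MDS array code: for every subset S of {1,...,n} of size k, the values (C_i)_{i ∈ S} determine the full codeword. -/
open Finset Matrix

section MDSAux

lemma mds_vand {F ι m : Type*} [Field F] [Fintype m] [DecidableEq m] [DecidableEq ι] (N : ℕ) :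
    ∀ (T : Finset ι) (M : ι → Matrix m m F) (v : ι → m → F),
    T.card = N →
    (∀ i j, Commute (M i) (M j)) →
    (∀ i ∈ T, ∀ j ∈ T, i ≠ j → IsUnit (M i - M j)) →
    (∀ t < N, ∑ i ∈ T, (M i ^ t).mulVec (v i) = 0) →
    ∀ i ∈ T, v i = 0 := by
  induction N with
  | zero =>
    intro T M v hT _ _ _ i hi
    rw [Finset.card_eq_zero] at hT; subst hT; simp at hi
  | succ N ih =>
    intro T M v hT hcomm hunit hchk
    obtain ⟨j, hj⟩ : T.Nonempty := by rw [← Finset.card_pos, hT]; omega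
    have hT' : (T.erase j).card = N := by rw [Finset.card_erase_of_mem hj, hT]; omega
    set w : ι → m → F := fun i => (M i - M j).mulVec (v i) with hw
    have hchk' : ∀ t < N, ∑ i ∈ T.erase j, (M i ^ t).mulVec (w i) = 0 := by
      intro t ht
      have key : ∀ i, (M i ^ t).mulVec (w i)
          = (M i ^ (t+1)).mulVec (v i) - (M j).mulVec ((M i ^ t).mulVec (v i)) := by
        intro i
        have hm : M i ^ t * (M i - M j) = M i ^ (t+1) - M j * M i ^ t := by
          rw [mul_sub, pow_succ]
          congr 1
          exact ((hcomm i j).pow_left t).eq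
        rw [hw]
        dsimp only
        rw [mulVec_mulVec, hm, sub_mulVec, mulVec_mulVec]
      have hsum : ∑ i ∈ T, (M i ^ t).mulVec (w i) = 0 := by
        simp only [key, Finset.sum_sub_distrib]
        have hlin : ∑ x ∈ T, (M j).mulVec ((M x ^ t).mulVec (v x))
            = (M j).mulVec (∑ x ∈ T, (M x ^ t).mulVec (v x)) := by
          simp only [← Matrix.mulVecLin_apply]
          exact (map_sum ((M j).mulVecLin) _ T).symm
        rw [hchk (t+1) (by omega), hlin, hchk t (by omega), Matrix.mulVec_zero, sub_zero]
      have hjz : (M j ^ t).mulVec (w j) = 0 := by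
        rw [hw]; simp
      rw [← Finset.add_sum_erase T _ hj, hjz, zero_add] at hsum
      exact hsum
    have hz := ih (T.erase j) M w hT' hcomm
      (fun i hi j' hj' hne => hunit i (Finset.mem_of_mem_erase hi) j'
        (Finset.mem_of_mem_erase hj') hne) hchk'
    have hv : ∀ i ∈ T, i ≠ j → v i = 0 := by
      intro i hi hij
      have hwz : w i = 0 := hz i (Finset.mem_erase.2 ⟨hij, hi⟩)
      have hdet := (Matrix.isUnit_iff_isUnit_det _).1 (hunit i hi j hj hij)
      have h1 : (M i - M j)⁻¹.mulVec (w i) = v i := by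
        rw [hw]
        dsimp only
        rw [mulVec_mulVec, Matrix.nonsing_inv_mul _ hdet, one_mulVec]
      rw [hwz, mulVec_zero] at h1
      exact h1.symm
    intro i hi
    by_cases hij : i = j
    · subst hij
      have h0 := hchk 0 (by omega)
      rw [Finset.sum_congr rfl (fun x _ => by rw [pow_zero, one_mulVec])] at h0
      rw [← Finset.add_sum_erase T _ hj] at h0
      rw [Finset.sum_eq_zero (fun x hx => hv x (Finset.mem_of_mem_erase hx)
        (Finset.ne_of_mem_erase hx)), add_zero] at h0
      exact h0
    · exact hv i hi hij

variable {F : Type*} [Field F] {s n : ℕ} [NeZero s]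

lemma mds_shift_pow (i : Fin n) (γ : F) (A : Matrix (Fin n → ZMod s) (Fin n → ZMod s) F)
    (hA : ∀ a b, A a b = if b = Function.update a i (a i + 1)
      then (if a i = 0 then γ else 1) else 0) (t : ℕ) :
    ∀ a b, (A ^ t) a b =
      if b = Function.update a i (a i + (t : ZMod s))
      then γ ^ (∑ m ∈ Finset.range t, if a i + (m : ZMod s) = 0 then 1 else 0)
      else 0 := by
  induction t with
  | zero =>
    intro a b
    simp [Matrix.one_apply, eq_comm]
  | succ t ih =>
    intro a b
    rw [pow_succ', Matrix.mul_apply]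
    rw [Finset.sum_eq_single (Function.update a i (a i + 1))]
    · rw [hA, if_pos rfl, ih]
      have h1 : Function.update a i (a i + 1) i = a i + 1 := Function.update_self i _ a
      have h2 : Function.update (Function.update a i (a i + 1)) i
          (Function.update a i (a i + 1) i + (t : ZMod s))
          = Function.update a i (a i + ((t + 1 : ℕ) : ZMod s)) := by
        rw [h1, Function.update_idem]
        congr 1
        push_cast
        ring
      rw [h2]
      have h3 : (∑ m ∈ Finset.range (t+1), if a i + (m : ZMod s) = 0 then 1 else 0)
          = (∑ m ∈ Finset.range t,
              if Function.update a i (a i + 1) i + (m : ZMod s) = 0 then 1 else 0)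
            + (if a i = 0 then 1 else 0) := by
        rw [Finset.sum_range_succ' (fun m => if a i + (m : ZMod s) = 0 then 1 else 0) t]
        congr 1
        · apply Finset.sum_congr rfl
          intro m _
          have hrw : a i + (((m + 1 : ℕ)) : ZMod s)
              = Function.update a i (a i + 1) i + (m : ZMod s) := by
            rw [h1]; push_cast; ring
          rw [hrw]
        · simp
      by_cases hb : b = Function.update a i (a i + ((t + 1 : ℕ) : ZMod s))
      · rw [if_pos hb, if_pos hb, h3, pow_add]
        rcases eq_or_ne (a i) 0 with h | h <;> simp [h, mul_comm]
      · rw [if_neg hb, if_neg hb, mul_zero]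
    · intro c _ hne
      rw [hA, if_neg hne, zero_mul]
    · simp

lemma mds_shift_pow_self (i : Fin n) (γ : F) (A : Matrix (Fin n → ZMod s) (Fin n → ZMod s) F)
    (hA : ∀ a b, A a b = if b = Function.update a i (a i + 1)
      then (if a i = 0 then γ else 1) else 0) :
    A ^ s = γ • (1 : Matrix (Fin n → ZMod s) (Fin n → ZMod s) F) := by
  ext a b
  rw [mds_shift_pow i γ A hA s a b]
  have h0 : ((s : ℕ) : ZMod s) = 0 := ZMod.natCast_self s
  rw [h0, add_zero, Function.update_eq_self]
  have hcard : (∑ m ∈ Finset.range s, if a i + (m : ZMod s) = 0 then 1 else 0) = 1 := by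
    rw [← Finset.card_filter]
    have hset : (Finset.range s).filter (fun (m : ℕ) => a i + (m : ZMod s) = 0)
        = {(-(a i)).val} := by
      ext m
      simp only [Finset.mem_filter, Finset.mem_range, Finset.mem_singleton]
      constructor
      · rintro ⟨hm, hz⟩
        have hmz : ((m : ℕ) : ZMod s) = -(a i) := by linear_combination hz
        rw [← hmz, ZMod.val_cast_of_lt hm]
      · rintro rfl
        refine ⟨ZMod.val_lt _, ?_⟩
        rw [ZMod.natCast_val, ZMod.cast_id]
        ring
    rw [hset, Finset.card_singleton]
  rw [hcard, pow_one, Matrix.smul_apply, Matrix.one_apply]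
  by_cases hab : a = b <;> simp [hab, eq_comm]

lemma mds_shift_commute {i j : Fin n} (hij : i ≠ j) (c1 c2 : F)
    (B C : Matrix (Fin n → ZMod s) (Fin n → ZMod s) F)
    (hB : ∀ a b, B a b = if b = Function.update a i (a i + 1)
      then (if a i = 0 then c1 else 1) else 0)
    (hC : ∀ a b, C a b = if b = Function.update a j (a j + 1)
      then (if a j = 0 then c2 else 1) else 0) :
    Commute B C := by
  ext a b
  rw [Matrix.mul_apply, Matrix.mul_apply]
  rw [Finset.sum_eq_single (Function.update a i (a i + 1)),
      Finset.sum_eq_single (Function.update a j (a j + 1))]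
  · have e1 : Function.update a i (a i + 1) j = a j := Function.update_of_ne (Ne.symm hij) _ a
    have e2 : Function.update a j (a j + 1) i = a i := Function.update_of_ne hij _ a
    rw [hB a (Function.update a i (a i + 1)), if_pos rfl]
    rw [hC (Function.update a i (a i + 1)) b]
    rw [hC a (Function.update a j (a j + 1)), if_pos rfl]
    rw [hB (Function.update a j (a j + 1)) b]
    rw [e1, e2, Function.update_comm hij]
    by_cases hb : b = Function.update (Function.update a j (a j + 1)) i (a i + 1)
    · rw [if_pos hb, if_pos hb]; ring
    · rw [if_neg hb, if_neg hb, mul_zero, mul_zero]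
  · intro c _ hne
    rw [hC a c, if_neg hne, zero_mul]
  · simp
  · intro c _ hne
    rw [hB a c, if_neg hne, zero_mul]
  · simp

end MDSAux



/-- MDS property of Construction 2: the array code cut out by the parity checks
`∑_i A_i^t C_i = 0` (t < r = n - k), where the `A_i` are the digit-shift
generalized permutation matrices with `A_i^s = γ^i I` and `γ^1,…,γ^n` pairwise
distinct, is an `(n, k, s^n)` MDS array code: any `k` coordinates determine the
whole codeword. -/
theorem stmt_18 (F : Type*) [Field F] (s n k h : ℕ) [NeZero s] (hs : 1 ≤ s)
    (hk : k ≤ n) (hh : h + k ≤ n) (hhs : h * s ≤ n - k)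
    (γ : F) (hγ : γ ≠ 0)
    (hdist : ∀ i j : Fin n, i ≠ j → γ ^ (i.val + 1) ≠ γ ^ (j.val + 1))
    (A : Fin n → Matrix (Fin n → ZMod s) (Fin n → ZMod s) F)
    (hA : ∀ i a b, A i a b =
      if b = Function.update a i (a i + 1)
        then (if a i = 0 then γ ^ (i.val + 1) else 1) else 0) :
    ∀ C D : Fin n → (Fin n → ZMod s) → F,
      (∀ t < n - k, ∑ i, (A i ^ t).mulVec (C i) = 0) →
      (∀ t < n - k, ∑ i, (A i ^ t).mulVec (D i) = 0) →
      ∀ S : Finset (Fin n), S.card = k → (∀ i ∈ S, C i = D i) → C = D := by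
  intro C D hC hD S hScard hCD
  set E : Fin n → (Fin n → ZMod s) → F := fun i => C i - D i with hE
  -- parity checks for E
  have hEchk : ∀ t < n - k, ∑ i, (A i ^ t).mulVec (E i) = 0 := by
    intro t ht
    have : ∀ i, (A i ^ t).mulVec (E i)
        = (A i ^ t).mulVec (C i) - (A i ^ t).mulVec (D i) := by
      intro i
      rw [hE]
      exact Matrix.mulVec_sub _ _ _
    simp only [this, Finset.sum_sub_distrib]
    rw [hC t ht, hD t ht, sub_zero]
  have hEzeroS : ∀ i ∈ S, E i = 0 := by
    intro i hi
    rw [hE]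
    simp [hCD i hi]
  -- restrict to the complement
  have hTcard : Sᶜ.card = n - k := by
    rw [Finset.card_compl, hScard, Fintype.card_fin]
  have hTchk : ∀ t < n - k, ∑ i ∈ Sᶜ, (A i ^ t).mulVec (E i) = 0 := by
    intro t ht
    rw [Finset.sum_subset (Finset.subset_univ Sᶜ)
      (fun x _ hx => by
        rw [hEzeroS x (by simpa using hx), Matrix.mulVec_zero])]
    exact hEchk t ht
  -- commuting and invertibility
  have hcomm : ∀ i j, Commute (A i) (A j) := by
    intro i j
    by_cases hij : i = j
    · subst hij; exact Commute.refl _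
    · exact mds_shift_commute hij _ _ _ _ (hA i) (hA j)
  have hunit : ∀ i ∈ Sᶜ, ∀ j ∈ Sᶜ, i ≠ j → IsUnit (A i - A j) := by
    intro i _ j _ hij
    have hdvd : A i - A j ∣ A i ^ s - A j ^ s := (hcomm i j).sub_dvd_pow_sub_pow s
    obtain ⟨q, hq⟩ := hdvd
    rw [mds_shift_pow_self i _ _ (hA i), mds_shift_pow_self j _ _ (hA j)] at hq
    have hc : γ ^ (i.val + 1) - γ ^ (j.val + 1) ≠ 0 :=
      sub_ne_zero_of_ne (hdist i j hij)
    have hdq : ((A i - A j) * q).det ≠ 0 := by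
      rw [← hq, ← sub_smul, Matrix.det_smul, Matrix.det_one, mul_one]
      exact pow_ne_zero _ hc
    rw [Matrix.det_mul] at hdq
    rw [Matrix.isUnit_iff_isUnit_det, isUnit_iff_ne_zero]
    exact left_ne_zero_of_mul hdq
  have hEzero := mds_vand (n - k) Sᶜ A E hTcard hcomm hunit hTchk
  funext i
  by_cases hi : i ∈ S
  · exact hCD i hi
  · have : E i = 0 := hEzero i (Finset.mem_compl.2 hi)
    rw [hE] at this
    exact sub_eq_zero.1 this
end
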